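/- Let X be a geodesic δ-hyperbolic metric space, let A and B be isometries of X, and let L_A, L_B : ℝ → X be geodesic lines such that dist(A x, L_A(ℝ)) ≤ 2δ and dist(A⁻¹ x, L_A(ℝ)) ≤ 2δ for every x ∈ L_A(ℝ), and dist(B x, L_B(ℝ)) ≤ 2δ and dist(B⁻¹ x, L_B(ℝ)) ≤ 2δ for every x ∈ L_B(ℝ). Suppose there exist x_A ∈ L_A(ℝ) and x_B ∈ L_B(ℝ) with d(x_A, x_B) = dist(L_A(ℝ), L_B(ℝ)), and assume dist(L_A(ℝ), L_B(ℝ)) > 50δ, l_S(A) > 50δ and l_S(B) > 50δ. Then l_S(AB) ≥ l_S(A) + l_S(B) − 144δ. -/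

import Mathlib

/-!
Rips thinness gives Gromov's four-point condition with constant `3δ`. Thinness of the triangle
spanned by `x_B`, its nearest point `x_A` on `L_A` and another point `u` of `L_A` gives
`(u|x_B)_{x_A} ≤ 2δ`, hence `≤ 4δ` for `u` within `2δ` of `L_A`, in particular for `u = A^{±1} x_A`;
symmetrically at `x_B`. So the `AB`-orbit of the broken line `x_B, x_A, A x_A, A x_B` has sides
longer than `14δ` and corner Gromov products at most `4δ`. In a `3δ`-hyperbolic space such a chain
loses at most `2(4δ + 3δ)` per corner, so `d(x_B, (AB)ⁿ x_B) ≥ n (2 d(x_A, x_B) + |A| + |B| - 56δ)`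
with `|A| = d(A x_A, x_A) ≥ l_S(A)` and `|B| = d(B x_B, x_B) ≥ l_S(B)`; divide by `n`.
-/

open Metric Filter Set Topology

/-- The Gromov product `(x|y)_z = ½(d(z,x)+d(z,y)−d(x,y))`. -/
noncomputable def gromovProd {X : Type*} [MetricSpace X] (x y z : X) : ℝ :=
  (dist z x + dist z y - dist x y) / 2

/-- A parametrized geodesic segment from `x` to `y` (defined on `[0, dist x y]`). -/
def IsGeodesicSegment {X : Type*} [MetricSpace X] (x y : X) (f : ℝ → X) : Prop :=
  f 0 = x ∧ f (dist x y) = y ∧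
    ∀ s ∈ Set.Icc (0 : ℝ) (dist x y), ∀ t ∈ Set.Icc (0 : ℝ) (dist x y),
      dist (f s) (f t) = |s - t|

/-- The metric space `X` is geodesic: any two points are joined by a geodesic segment. -/
def GeodesicMetricSpace (X : Type*) [MetricSpace X] : Prop :=
  ∀ x y : X, ∃ f : ℝ → X, IsGeodesicSegment x y f

/-- `X` is δ-hyperbolic in the sense of Rips: every geodesic triangle is δ-thin,
i.e. each side is contained in the δ-neighbourhood of the union of the other two. -/
def RipsHyperbolic (X : Type*) [MetricSpace X] (δ : ℝ) : Prop :=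
  ∀ (x y z : X) (f g h : ℝ → X),
    IsGeodesicSegment x y f → IsGeodesicSegment y z g → IsGeodesicSegment z x h →
      ∀ s ∈ Set.Icc (0 : ℝ) (dist x y),
        infDist (f s) (g '' Set.Icc 0 (dist y z) ∪ h '' Set.Icc 0 (dist z x)) ≤ δ

/-- A (parametrized) geodesic line in `X`. -/
def IsGeodesicLine {X : Type*} [MetricSpace X] (L : ℝ → X) : Prop :=
  ∀ s t : ℝ, dist (L s) (L t) = |s - t|

/-- A (parametrized) geodesic ray in `X` (parametrized on `[0,∞)`). -/
def IsGeodesicRay {X : Type*} [MetricSpace X] (r : ℝ → X) : Prop :=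
  ∀ s t : ℝ, 0 ≤ s → 0 ≤ t → dist (r s) (r t) = |s - t|

/-- `L` is a geodesic from `A⁻` to `A⁺` (oriented toward `A⁺`): it is a geodesic line
such that, with `x₀ = L 0`, the Gromov products `(Aⁿx₀ | L t)_{x₀}` tend to `+∞` as
`min(n,t) → +∞`, and `(A⁻ⁿx₀ | L (−t))_{x₀}` tend to `+∞` as `min(n,t) → +∞`. -/
def IsGeodesicFromTo {X : Type*} [MetricSpace X] (A : X ≃ᵢ X) (L : ℝ → X) : Prop :=
  IsGeodesicLine L ∧
    (∀ M : ℝ, ∃ N : ℝ, ∀ (n : ℕ) (t : ℝ), N ≤ (n : ℝ) → N ≤ t →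
      M ≤ gromovProd ((A ^ n) (L 0)) (L t) (L 0)) ∧
    (∀ M : ℝ, ∃ N : ℝ, ∀ (n : ℕ) (t : ℝ), N ≤ (n : ℝ) → N ≤ t →
      M ≤ gromovProd ((A⁻¹ ^ n) (L 0)) (L (-t)) (L 0))

/-- An element of `F₂` is primitive if it is the image of a generator under an
automorphism of `F₂` (equivalently, it belongs to some free basis). -/
def Primitive (γ : FreeGroup (Fin 2)) : Prop :=
  ∃ φ : FreeGroup (Fin 2) ≃* FreeGroup (Fin 2), φ (FreeGroup.of 0) = γ

/-- The (reduced) word length of an element of `F₂`. -/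
noncomputable def wordLength (γ : FreeGroup (Fin 2)) : ℕ := γ.toWord.length

/-- The cyclically reduced word length `‖γ‖`: the minimum of the word lengths
of the conjugates of `γ`. -/
noncomputable def cycLength (γ : FreeGroup (Fin 2)) : ℕ :=
  sInf (Set.range fun g : FreeGroup (Fin 2) => wordLength (g * γ * g⁻¹))

/-- `γ` is cyclically reduced if its word length equals its cyclically reduced length. -/
def CyclicallyReduced (γ : FreeGroup (Fin 2)) : Prop :=
  wordLength γ = cycLength γ

def GromovHyperbolic (X : Type*) [MetricSpace X] (δ : ℝ) : Prop :=
  ∀ w x y z : X, min (gromovProd x y w) (gromovProd y z w) ≤ gromovProd x z w + δ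

section

variable {X : Type*} [MetricSpace X]

theorem gromovProd_comm (x y z : X) : gromovProd x y z = gromovProd y x z := by
  unfold gromovProd; rw [dist_comm x y]; ring

theorem gromovProd_nonneg (x y z : X) : 0 ≤ gromovProd x y z := by
  unfold gromovProd; linarith [dist_triangle x z y, dist_comm x z]

theorem gromovProd_le_dist_left (x y z : X) : gromovProd x y z ≤ dist z x := by
  unfold gromovProd; linarith [dist_triangle z x y]

theorem gromovProd_le_dist_right (x y z : X) : gromovProd x y z ≤ dist z y := by
  unfold gromovProd; linarith [dist_triangle z y x, dist_comm x y]

theorem gromovProd_base_left (y z : X) : gromovProd z y z = 0 := by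
  simp [gromovProd]

theorem gromovProd_add_gromovProd (x y z : X) :
    gromovProd x y z + gromovProd x z y = dist y z := by
  unfold gromovProd; rw [dist_comm z x, dist_comm z y, dist_comm y x]; ring

theorem dist_eq_sub_gromovProd (x y z : X) :
    dist x y = dist z x + dist z y - 2 * gromovProd x y z := by
  unfold gromovProd; ring

theorem gromovProd_le_add_dist (x x' y z : X) :
    gromovProd x' y z ≤ gromovProd x y z + dist x x' := by
  unfold gromovProd; linarith [dist_triangle z x x', dist_triangle x x' y]

theorem IsometryEquiv.gromovProd_map (e : X ≃ᵢ X) (x y z : X) :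
    gromovProd (e x) (e y) (e z) = gromovProd x y z := by
  simp only [gromovProd, e.dist_eq]

theorem gromovProd_le_add_infDist {S : Set X} (hS : S.Nonempty) {v z : X} {C : ℝ}
    (h : ∀ u ∈ S, gromovProd u v z ≤ C) (u : X) :
    gromovProd u v z ≤ C + infDist u S := by
  suffices gromovProd u v z - C ≤ infDist u S by linarith
  refine (le_infDist hS).2 fun u' hu' => ?_
  linarith [h u' hu', gromovProd_le_add_dist u' u v z, dist_comm u u']

namespace IsGeodesicSegment

variable {x y : X} {f : ℝ → X} {s : ℝ}

theorem dist_left (hf : IsGeodesicSegment x y f) (hs : s ∈ Icc 0 (dist x y)) :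
    dist x (f s) = s := by
  rw [← hf.1, hf.2.2 0 ⟨le_rfl, dist_nonneg⟩ s hs, zero_sub, abs_neg, abs_of_nonneg hs.1]

theorem dist_right (hf : IsGeodesicSegment x y f) (hs : s ∈ Icc 0 (dist x y)) :
    dist (f s) y = dist x y - s := by
  conv_lhs => rw [← hf.2.1]
  rw [hf.2.2 s hs _ ⟨dist_nonneg, le_rfl⟩, abs_sub_comm, abs_of_nonneg (sub_nonneg.2 hs.2)]

theorem gromovProd_le_dist (hf : IsGeodesicSegment x y f) (hs : s ∈ Icc 0 (dist x y)) (z : X) :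
    gromovProd x y z ≤ dist z (f s) := by
  have hx := hf.dist_left hs
  have hy := hf.dist_right hs
  unfold gromovProd
  linarith [dist_triangle z (f s) x, dist_triangle z (f s) y, dist_comm x (f s)]

end IsGeodesicSegment

theorem IsGeodesicLine.exists_isGeodesicSegment {L : ℝ → X} (hL : IsGeodesicLine L) (a b : ℝ) :
    ∃ f : ℝ → X, IsGeodesicSegment (L a) (L b) f ∧ ∀ s, f s ∈ range L := by
  rcases le_total a b with hab | hab
  · refine ⟨fun t => L (a + t), ⟨by simp, ?_, fun s _ t _ => ?_⟩, fun s => ⟨a + s, rfl⟩⟩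
    · rw [hL, abs_of_nonpos (by linarith)]; ring_nf
    · rw [hL]; ring_nf
  · refine ⟨fun t => L (a - t), ⟨by simp, ?_, fun s _ t _ => ?_⟩, fun s => ⟨a - s, rfl⟩⟩
    · rw [hL, abs_of_nonneg (by linarith)]; ring_nf
    · rw [hL, abs_sub_comm]; ring_nf

namespace RipsHyperbolic

variable {δ : ℝ}

theorem le_of_forall_le_dist (hX : RipsHyperbolic X δ) {x y z : X} {f g h : ℝ → X}
    (hf : IsGeodesicSegment x y f) (hg : IsGeodesicSegment y z g) (hh : IsGeodesicSegment z x h)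
    {s r : ℝ} (hs : s ∈ Icc 0 (dist x y))
    (hrg : ∀ t ∈ Icc 0 (dist y z), r ≤ dist (f s) (g t))
    (hrh : ∀ t ∈ Icc 0 (dist z x), r ≤ dist (f s) (h t)) : r ≤ δ := by
  refine le_trans ?_ (hX x y z f g h hf hg hh s hs)
  refine (le_infDist ⟨g 0, Or.inl ⟨0, ⟨le_rfl, dist_nonneg⟩, rfl⟩⟩).2 ?_
  rintro q (⟨t, ht, rfl⟩ | ⟨t, ht, rfl⟩)
  exacts [hrg t ht, hrh t ht]

theorem min_gromovProd_le_dist_add (hX : RipsHyperbolic X δ) (hgeo : GeodesicMetricSpace X)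
    {x z : X} {f : ℝ → X} (hf : IsGeodesicSegment x z f) {s : ℝ} (hs : s ∈ Icc 0 (dist x z))
    (w y : X) : min (gromovProd x y w) (gromovProd y z w) ≤ dist w (f s) + δ := by
  obtain ⟨g, hg⟩ := hgeo z y
  obtain ⟨h, hh⟩ := hgeo y x
  suffices min (gromovProd x y w) (gromovProd y z w) - dist w (f s) ≤ δ by linarith
  refine hX.le_of_forall_le_dist hf hg hh hs (fun t ht => ?_) (fun t ht => ?_)
  · have := (min_le_right (gromovProd x y w) (gromovProd y z w)).trans_eq (gromovProd_comm y z w)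
    linarith [hg.gromovProd_le_dist ht w, dist_triangle w (f s) (g t)]
  · have := (min_le_left (gromovProd x y w) (gromovProd y z w)).trans_eq (gromovProd_comm x y w)
    linarith [hh.gromovProd_le_dist ht w, dist_triangle w (f s) (h t)]

/-- `f (gromovProd w z x)` is the point of `[x, z]` at which the inscribed tripod of the
triangle `x z w` touches that side. -/
theorem dist_le_gromovProd_add (hX : RipsHyperbolic X δ) (hgeo : GeodesicMetricSpace X)
    {x z : X} {f : ℝ → X} (hf : IsGeodesicSegment x z f) (w : X) :
    dist w (f (gromovProd w z x)) ≤ gromovProd x z w + 2 * δ := by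
  obtain ⟨g, hg⟩ := hgeo z w
  obtain ⟨h, hh⟩ := hgeo w x
  set s := gromovProd w z x
  have hs : s ∈ Icc 0 (dist x z) := ⟨gromovProd_nonneg _ _ _, gromovProd_le_dist_right _ _ _⟩
  have hxp := hf.dist_left hs
  have hpz := hf.dist_right hs
  have hsw : s = (dist x w + dist x z - dist w z) / 2 := rfl
  have hw : gromovProd x z w = (dist w x + dist w z - dist x z) / 2 := rfl
  suffices (dist w (f s) - gromovProd x z w) / 2 ≤ δ by linarith
  refine hX.le_of_forall_le_dist hf hg hh hs (fun t ht => ?_) (fun t ht => ?_)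
  · have := hg.dist_left ht
    have := hg.dist_right ht
    linarith [dist_triangle w (g t) (f s), dist_triangle (f s) (g t) z, dist_comm w (g t),
      dist_comm z (g t), dist_comm (g t) (f s), dist_comm z w, dist_comm x w]
  · have := hh.dist_left ht
    have := hh.dist_right ht
    linarith [dist_triangle w (h t) (f s), dist_triangle x (h t) (f s), dist_comm x (h t),
      dist_comm (h t) (f s), dist_comm x w, dist_comm z w]

theorem gromovHyperbolic (hX : RipsHyperbolic X δ) (hgeo : GeodesicMetricSpace X) :
    GromovHyperbolic X (3 * δ) := by
  intro w x y z
  obtain ⟨f, hf⟩ := hgeo x z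
  have hs : gromovProd w z x ∈ Icc 0 (dist x z) :=
    ⟨gromovProd_nonneg _ _ _, gromovProd_le_dist_right _ _ _⟩
  linarith [hX.min_gromovProd_le_dist_add hgeo hf hs w y, hX.dist_le_gromovProd_add hgeo hf w]

theorem gromovProd_le_of_forall_dist_le (hX : RipsHyperbolic X δ)
    (hgeo : GeodesicMetricSpace X) {L : ℝ → X} (hL : IsGeodesicLine L) {x y u : X}
    (hx : x ∈ range L) (hu : u ∈ range L) (hmin : ∀ q ∈ range L, dist x y ≤ dist q y) :
    gromovProd u y x ≤ 2 * δ := by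
  obtain ⟨a, rfl⟩ := hx
  obtain ⟨b, rfl⟩ := hu
  obtain ⟨f, hf⟩ := hgeo (L a) y
  obtain ⟨g, hg⟩ := hgeo y (L b)
  obtain ⟨h, hh, hhL⟩ := hL.exists_isGeodesicSegment b a
  rw [gromovProd_comm]
  set G := gromovProd y (L b) (L a)
  have hG := gromovProd_nonneg y (L b) (L a)
  have hs : G / 2 ∈ Icc 0 (dist (L a) y) :=
    ⟨by linarith, by linarith [gromovProd_le_dist_left y (L b) (L a)]⟩
  have hap := hf.dist_left hs
  have hpy := hf.dist_right hs
  suffices G / 2 ≤ δ by linarith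
  refine hX.le_of_forall_le_dist hf hg hh hs (fun t ht => ?_) (fun t _ => ?_)
  · linarith [hg.gromovProd_le_dist ht (L a), dist_triangle (L a) (f (G / 2)) (g t)]
  · linarith [hmin (h t) (hhL t), dist_triangle (h t) (f (G / 2)) y, dist_comm (h t) (f (G / 2))]

end RipsHyperbolic

theorem Function.Periodic.sum_range_mul {M : Type*} [AddCommMonoid M] {f : ℕ → M} {k : ℕ}
    (hf : Periodic f k) (n : ℕ) :
    ∑ i ∈ Finset.range (k * n), f i = n • ∑ i ∈ Finset.range k, f i := by
  induction n with
  | zero => simp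
  | succ n ih =>
    rw [mul_add_one, Finset.sum_range_add, ih, succ_nsmul]
    congr 1
    refine Finset.sum_congr rfl fun i _ => ?_
    rw [add_comm, mul_comm]
    exact hf.nat_mul n i

namespace GromovHyperbolic

variable {δ K : ℝ}

theorem gromovProd_le_of_add_lt (hX : GromovHyperbolic X δ) {w x y z : X}
    (hlt : gromovProd x z w + δ < gromovProd x y w) :
    gromovProd y z w ≤ gromovProd x z w + δ := by
  rcases min_le_iff.1 (hX w x y z) with h | h
  · linarith
  · exact h

section Chain

variable {p : ℕ → X} {m : ℕ}

theorem gromovProd_chain_le (hX : GromovHyperbolic X δ) (hKδ : 0 ≤ K + δ)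
    (hd : ∀ i, i + 2 ≤ m → 2 * K + 2 * δ < dist (p i) (p (i + 1)))
    (hprod : ∀ i, i + 2 ≤ m → gromovProd (p i) (p (i + 2)) (p (i + 1)) ≤ K) :
    ∀ n, n + 1 ≤ m → gromovProd (p 0) (p (n + 1)) (p n) ≤ K + δ
  | 0, _ => by rw [gromovProd_base_left]; exact hKδ
  | n + 1, hn => by
    have ih := gromovProd_chain_le hX hKδ hd hprod n (by omega)
    have hsplit := gromovProd_add_gromovProd (p 0) (p n) (p (n + 1))
    have hprod_n := hprod n hn
    have hd_n := hd n hn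
    rw [gromovProd_comm (p 0) (p n)] at hsplit
    -- the side `[p n, p (n + 1)]` is long and `(p 0 | p (n + 1))_{p n}` small, so
    -- `(p n | p 0)_{p (n + 1)}` is large and the four-point condition applies at `p (n + 1)`
    have := hX.gromovProd_le_of_add_lt (w := p (n + 1)) (x := p n) (y := p 0) (z := p (n + 2))
      (by linarith)
    linarith

theorem sum_sub_le_dist_of_chain (hX : GromovHyperbolic X δ) (hKδ : 0 ≤ K + δ)
    (hd : ∀ i, i + 2 ≤ m → 2 * K + 2 * δ < dist (p i) (p (i + 1)))
    (hprod : ∀ i, i + 2 ≤ m → gromovProd (p i) (p (i + 2)) (p (i + 1)) ≤ K) :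
    ∀ n ≤ m, ∑ i ∈ Finset.range n, dist (p i) (p (i + 1)) - 2 * n * (K + δ) ≤ dist (p 0) (p n)
  | 0, _ => by simp
  | n + 1, hn => by
    have ih := sum_sub_le_dist_of_chain hX hKδ hd hprod n (by omega)
    have hcorner := hX.gromovProd_chain_le hKδ hd hprod n hn
    rw [Finset.sum_range_succ, dist_eq_sub_gromovProd (p 0) (p (n + 1)) (p n),
      dist_comm (p n) (p 0)]
    push_cast
    linarith

end Chain

theorem mul_le_dist_pow_of_periodic (hX : GromovHyperbolic X δ) (hKδ : 0 ≤ K + δ)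
    {g : X ≃ᵢ X} {k : ℕ} (hk : 0 < k) {p : ℕ → X} (hp : ∀ j, p (j + k) = g (p j))
    (hd : ∀ i < k, 2 * K + 2 * δ < dist (p i) (p (i + 1)))
    (hprod : ∀ i < k, gromovProd (p i) (p (i + 2)) (p (i + 1)) ≤ K) (n : ℕ) :
    n * (∑ i ∈ Finset.range k, dist (p i) (p (i + 1)) - 2 * k * (K + δ))
      ≤ dist (p 0) ((g ^ n) (p 0)) := by
  have hpow : ∀ j, p (k * j) = (g ^ j) (p 0) := by
    intro j
    induction j with
    | zero => simp
    | succ j ih => rw [mul_add_one, hp, ih, pow_succ', IsometryEquiv.mul_apply]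
  have hd_per : Function.Periodic (fun i => dist (p i) (p (i + 1))) k := fun i => by
    simp only [add_right_comm i k 1, hp, g.dist_eq]
  have hprod_per : Function.Periodic (fun i => gromovProd (p i) (p (i + 2)) (p (i + 1))) k :=
    fun i => by simp only [add_right_comm i k, hp, g.gromovProd_map]
  have hchain := hX.sum_sub_le_dist_of_chain hKδ (m := k * n)
    (fun i _ => (hd_per.map_mod_nat i) ▸ hd _ (Nat.mod_lt i hk))
    (fun i _ => (hprod_per.map_mod_nat i) ▸ hprod _ (Nat.mod_lt i hk)) (k * n) le_rfl
  rw [hd_per.sum_range_mul, hpow, nsmul_eq_mul] at hchain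
  push_cast at hchain
  linarith

/-- The `(A * B)`-orbit of the broken line `y, x, A x, A y` is a chain whose corner Gromov
products are, up to isometry, the four quantities bounded by `K` in the hypotheses. -/
theorem mul_le_dist_pow_mul_apply (hX : GromovHyperbolic X δ) (hKδ : 0 ≤ K + δ)
    {A B : X ≃ᵢ X} {x y : X}
    (hAx : gromovProd (A x) y x ≤ K) (hAx' : gromovProd (A⁻¹ x) y x ≤ K)
    (hBy : gromovProd (B y) x y ≤ K) (hBy' : gromovProd (B⁻¹ y) x y ≤ K)
    (hxy : 2 * K + 2 * δ < dist x y) (hA : 2 * K + 2 * δ < dist (A x) x)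
    (hB : 2 * K + 2 * δ < dist (B y) y) (n : ℕ) :
    n * (2 * dist x y + dist (A x) x + dist (B y) y - 8 * (K + δ))
      ≤ dist (((A * B) ^ n) y) y := by
  let q : ℕ → X := fun i => [y, x, A x, A y].getD i y
  let p : ℕ → X := fun j => ((A * B) ^ (j / 4)) (q (j % 4))
  have hp : ∀ j, p (j + 4) = (A * B) (p j) := fun j => by
    simp only [p, Nat.add_div_right j four_pos, Nat.add_mod_right, pow_succ',
      IsometryEquiv.mul_apply]
  have h0 : p 0 = y := rfl
  have h1 : p 1 = x := rfl
  have h2 : p 2 = A x := rfl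
  have h3 : p 3 = A y := rfl
  have h4 : p 4 = A (B y) := hp 0
  have h5 : p 5 = A (B x) := hp 1
  have hA' : gromovProd x (A y) (A x) = gromovProd (A⁻¹ x) y x := by
    simpa using A.gromovProd_map (A⁻¹ x) y x
  have hB' : gromovProd y (B x) (B y) = gromovProd (B⁻¹ y) x y := by
    simpa using B.gromovProd_map (B⁻¹ y) x y
  have hchain := hX.mul_le_dist_pow_of_periodic hKδ (by norm_num) hp
    (fun i hi => by
      interval_cases i <;> simp only [Nat.reduceAdd]
      · rw [h0, h1, dist_comm]; exact hxy
      · rw [h1, h2, dist_comm]; exact hA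
      · rw [h2, h3, A.dist_eq]; exact hxy
      · rw [h3, h4, A.dist_eq, dist_comm]; exact hB)
    (fun i hi => by
      interval_cases i <;> simp only [Nat.reduceAdd]
      · rw [h0, h1, h2, gromovProd_comm]; exact hAx
      · rw [h1, h2, h3, hA']; exact hAx'
      · rw [h2, h3, h4, A.gromovProd_map, gromovProd_comm]; exact hBy
      · rw [h3, h4, h5, A.gromovProd_map, hB']; exact hBy') n
  simp only [Finset.sum_range_succ, Finset.sum_range_zero, h0, h1, h2, h3, h4, A.dist_eq,
    Nat.cast_ofNat] at hchain
  rw [dist_comm y x, dist_comm x (A x), dist_comm y (B y), dist_comm y] at hchain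
  linarith

end GromovHyperbolic

namespace IsometryEquiv

variable (g : X ≃ᵢ X) {x : X} {l : ℝ}

theorem dist_pow_apply_le (y : X) (n : ℕ) : dist ((g ^ n) y) y ≤ n * dist (g y) y := by
  induction n with
  | zero => simp
  | succ n ih =>
    rw [pow_succ, mul_apply]
    push_cast
    linarith [dist_triangle ((g ^ n) (g y)) ((g ^ n) y) y, (g ^ n).dist_eq (g y) y]

theorem tendsto_dist_pow_apply_div_of_tendsto
    (h : Tendsto (fun n : ℕ => dist ((g ^ n) x) x / n) atTop (𝓝 l)) (y : X) :
    Tendsto (fun n : ℕ => dist ((g ^ n) y) y / n) atTop (𝓝 l) := by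
  have hdiff :
      Tendsto (fun n : ℕ => (dist ((g ^ n) y) y - dist ((g ^ n) x) x) / n) atTop (𝓝 0) := by
    refine squeeze_zero_norm (fun n => ?_) (tendsto_const_div_atTop_nhds_zero_nat (2 * dist x y))
    rw [norm_div, Real.norm_natCast]
    gcongr
    have := dist_dist_dist_le ((g ^ n) y) y ((g ^ n) x) x
    rw [(g ^ n).dist_eq, dist_comm y x] at this
    rw [Real.norm_eq_abs, ← Real.dist_eq]
    linarith
  simpa [← add_div] using h.add hdiff

theorem le_dist_apply_of_tendsto
    (h : Tendsto (fun n : ℕ => dist ((g ^ n) x) x / n) atTop (𝓝 l)) (y : X) :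
    l ≤ dist (g y) y :=
  le_of_tendsto' (g.tendsto_dist_pow_apply_div_of_tendsto h y) fun n =>
    div_le_of_le_mul₀ n.cast_nonneg dist_nonneg ((g.dist_pow_apply_le y n).trans_eq (mul_comm _ _))

theorem le_of_tendsto_of_le_dist_pow
    (h : Tendsto (fun n : ℕ => dist ((g ^ n) x) x / n) atTop (𝓝 l)) {y : X} {c : ℝ}
    (hc : ∀ n : ℕ, n * c ≤ dist ((g ^ n) y) y) : c ≤ l := by
  refine ge_of_tendsto (g.tendsto_dist_pow_apply_div_of_tendsto h y) ?_
  filter_upwards [eventually_gt_atTop 0] with n hn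
  rw [le_div_iff₀ (by exact_mod_cast hn), mul_comm]
  exact hc n

end IsometryEquiv

end

/-- If the axes of `A` and `B` are at distance `> 50δ` from each other and
`l_S(A) > 50δ`, `l_S(B) > 50δ`, then `l_S(AB) ≥ l_S(A) + l_S(B) − 144δ`. -/
theorem stable_norm_product_far_axes
    {X : Type*} [MetricSpace X] (δ : ℝ) (hδ : 0 ≤ δ)
    (hgeo : GeodesicMetricSpace X) (hhyp : RipsHyperbolic X δ)
    (x₀ : X) (A B : X ≃ᵢ X) (LA LB : ℝ → X)
    (hLA : IsGeodesicLine LA) (hLB : IsGeodesicLine LB)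
    (hAinv : ∀ x ∈ Set.range LA,
      infDist (A x) (Set.range LA) ≤ 2 * δ ∧ infDist (A⁻¹ x) (Set.range LA) ≤ 2 * δ)
    (hBinv : ∀ x ∈ Set.range LB,
      infDist (B x) (Set.range LB) ≤ 2 * δ ∧ infDist (B⁻¹ x) (Set.range LB) ≤ 2 * δ)
    (xA xB : X) (hxA : xA ∈ Set.range LA) (hxB : xB ∈ Set.range LB)
    (hmin : ∀ p ∈ Set.range LA, ∀ q ∈ Set.range LB, dist xA xB ≤ dist p q)
    (hfar : dist xA xB > 50 * δ)
    (lA lB lAB : ℝ)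
    (hlA : Tendsto (fun n : ℕ => dist ((A ^ n) x₀) x₀ / n) atTop (𝓝 lA))
    (hlB : Tendsto (fun n : ℕ => dist ((B ^ n) x₀) x₀ / n) atTop (𝓝 lB))
    (hlAB : Tendsto (fun n : ℕ => dist (((A * B) ^ n) x₀) x₀ / n) atTop (𝓝 lAB))
    (hlA50 : lA > 50 * δ) (hlB50 : lB > 50 * δ) :
    lA + lB - 144 * δ ≤ lAB := by
  have cornerA : ∀ u, infDist u (range LA) ≤ 2 * δ → gromovProd u xB xA ≤ 4 * δ := by
    intro u hu
    have := gromovProd_le_add_infDist ⟨xA, hxA⟩ (fun v hv =>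
      hhyp.gromovProd_le_of_forall_dist_le hgeo hLA hxA hv fun q hq => hmin q hq xB hxB) u
    linarith
  have cornerB : ∀ u, infDist u (range LB) ≤ 2 * δ → gromovProd u xA xB ≤ 4 * δ := by
    intro u hu
    have := gromovProd_le_add_infDist ⟨xB, hxB⟩ (fun v hv =>
      hhyp.gromovProd_le_of_forall_dist_le hgeo hLB hxB hv fun q hq => by
        rw [dist_comm, dist_comm q]; exact hmin xA hxA q hq) u
    linarith
  have hA := A.le_dist_apply_of_tendsto hlA xA
  have hB := B.le_dist_apply_of_tendsto hlB xB
  have horbit := (hhyp.gromovHyperbolic hgeo).mul_le_dist_pow_mul_apply (K := 4 * δ)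
    (by linarith) (cornerA _ (hAinv xA hxA).1) (cornerA _ (hAinv xA hxA).2)
    (cornerB _ (hBinv xB hxB).1) (cornerB _ (hBinv xB hxB).2)
    (by linarith) (by linarith) (by linarith)
  linarith [(A * B).le_of_tendsto_of_le_dist_pow hlAB horbit]
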